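/- arXiv:2308.00545 — 2 statements merged into one kernel-verified Lean document; each statement's English description precedes it below -/
import Mathlib

section
/- Let τ : (0,B) → (0,∞) be continuous and let β be an antiderivative of 1/τ on (0,B). Then the function H(s) := exp(β(s)) is differentiable with derivative h(s) := H(s)/τ(s) > 0, and the transform T_H(s) := H(s)/h(s) equals τ(s) for all s ∈ (0,B). Hence every positive continuous function on (0,B) arises as the transform T_H of some admissible pair (H,h). -/
open Real

theorem hasDerivAt_exp_comp_of_hasDerivAt_one_div {β : ℝ → ℝ} {c s : ℝ}
    (hβ : HasDerivAt β (1 / c) s) :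
    HasDerivAt (fun t => exp (β t)) (exp (β s) / c) s := by
  simpa only [mul_one_div] using hβ.exp

theorem stmt_1_general (τ β : ℝ → ℝ)
    (S : Set ℝ)
    (hτc : ContinuousOn τ S) (hτpos : ∀ s ∈ S, 0 < τ s)
    (hβ : ∀ s ∈ S, HasDerivAt β (1 / τ s) s) :
    (∀ s ∈ S,
      HasDerivAt (fun t => Real.exp (β t)) (Real.exp (β s) / τ s) s ∧
      0 < Real.exp (β s) / τ s ∧
      Real.exp (β s) / (Real.exp (β s) / τ s) = τ s) ∧
    ∃ H h : ℝ → ℝ, (∀ s ∈ S, HasDerivAt H (h s) s) ∧ (∀ s ∈ S, 0 < h s) ∧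
      ContinuousOn h S ∧ ∀ s ∈ S, H s / h s = τ s := by
  have key : ∀ s ∈ S,
      HasDerivAt (fun t => exp (β t)) (exp (β s) / τ s) s ∧
      0 < exp (β s) / τ s ∧ exp (β s) / (exp (β s) / τ s) = τ s := fun s hs =>
    ⟨hasDerivAt_exp_comp_of_hasDerivAt_one_div (hβ s hs), div_pos (exp_pos _) (hτpos s hs),
      div_div_cancel₀ (exp_pos _).ne'⟩
  have hβc : ContinuousOn β S := fun s hs => (hβ s hs).continuousAt.continuousWithinAt
  refine ⟨key, fun t => exp (β t), fun t => exp (β t) / τ t, fun s hs => (key s hs).1,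
    fun s hs => (key s hs).2.1, ?_, fun s hs => (key s hs).2.2⟩
  exact hβc.rexp.div hτc fun s hs => (hτpos s hs).ne'

/-- Every positive continuous function `τ` on `(0,B)` arises as the transform
`T_H = H/h` of an admissible pair `(H,h)`: taking `β` an antiderivative of `1/τ`
and `H = exp ∘ β`, the function `H` has derivative `h(s) = H(s)/τ(s) > 0` and
`H(s)/h(s) = τ(s)` on `(0,B)`. -/
theorem stmt_1 (B : EReal) (hB : 0 < B) (τ β : ℝ → ℝ)
    (S : Set ℝ) (hS : S = {s : ℝ | 0 < s ∧ (s : EReal) < B})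
    (hτc : ContinuousOn τ S) (hτpos : ∀ s ∈ S, 0 < τ s)
    (hβ : ∀ s ∈ S, HasDerivAt β (1 / τ s) s) :
    (∀ s ∈ S,
      HasDerivAt (fun t => Real.exp (β t)) (Real.exp (β s) / τ s) s ∧
      0 < Real.exp (β s) / τ s ∧
      Real.exp (β s) / (Real.exp (β s) / τ s) = τ s) ∧
    ∃ H h : ℝ → ℝ, (∀ s ∈ S, HasDerivAt H (h s) s) ∧ (∀ s ∈ S, 0 < h s) ∧
      ContinuousOn h S ∧ ∀ s ∈ S, H s / h s = τ s :=
  stmt_1_general τ β S hτc hτpos hβ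
end

section
/- Let α < 0, β < 0, β ∉ {-1,-2}, and β < 1/α - 2. Then for Ω = B(0,1) ⊂ ℝⁿ and u(x) = (1-|x|)^α, H̃(s) = s^{β+2}/((β+1)(β+2)), the second-order partial derivatives of H̃(u), of size comparable to (1-|x|)^{α(β+2)-2} plus (1-|x|)^{α(β+2)-1}/|x|, are integrable over Ω; in particular ∫_{B(0,1)} (1-|x|)^{α(β+2)-2} dx < ∞. -/
open MeasureTheory
open Measure Set Metric
open scoped ENNReal

lemma radial_aux {n : ℕ} (hn : 0 < n) (g : ℝ → ℝ) (hg : Measurable g)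
    (hg0 : ∀ r, 0 ≤ g r) (hgs : ∀ r : ℝ, 1 ≤ r → g r = 0)
    (hfin : ∫⁻ r in Set.Ioo (0:ℝ) 1, ENNReal.ofReal (r ^ (n-1) * g r) < ⊤) :
    Integrable (fun x : EuclideanSpace ℝ (Fin n) => g ‖x‖) volume := by
  haveI : NeZero n := ⟨hn.ne'⟩
  set E := EuclideanSpace ℝ (Fin n) with hE
  haveI : Nontrivial E := inferInstance
  set μ : Measure E := volume with hμ
  have hdim : Module.finrank ℝ E = n := finrank_euclideanSpace_fin
  refine ⟨(hg.comp measurable_norm).aestronglyMeasurable, ?_⟩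
  rw [hasFiniteIntegral_iff_ofReal (Filter.Eventually.of_forall fun x => hg0 _)]
  -- radial finiteness
  have hc : ∫⁻ r : Set.Ioi (0:ℝ), ENNReal.ofReal (g r) ∂(Measure.volumeIoiPow (n-1)) < ⊤ := by
    have hD : Measurable fun r : Set.Ioi (0:ℝ) => ENNReal.ofReal (r.1 ^ (n-1)) := by
      fun_prop
    have hG : Measurable fun r : Set.Ioi (0:ℝ) => ENNReal.ofReal (g r.1) := by
      fun_prop
    rw [Measure.volumeIoiPow, lintegral_withDensity_eq_lintegral_mul _ hD hG]
    simp only [Pi.mul_apply]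
    rw [lintegral_subtype_comap (measurableSet_Ioi (a := (0:ℝ)))
      (fun s : ℝ => ENNReal.ofReal (s ^ (n-1)) * ENNReal.ofReal (g s))]
    have hsub : Set.Ioi (0:ℝ) ⊆ Set.Ioo 0 1 ∪ Set.Ici 1 := by
      intro r hr
      rcases lt_or_ge r 1 with h | h
      · exact Or.inl ⟨hr, h⟩
      · exact Or.inr h
    calc ∫⁻ r in Set.Ioi (0:ℝ), ENNReal.ofReal (r ^ (n-1)) * ENNReal.ofReal (g r)
        ≤ ∫⁻ r in Set.Ioo (0:ℝ) 1 ∪ Set.Ici 1, ENNReal.ofReal (r ^ (n-1)) * ENNReal.ofReal (g r) :=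
          lintegral_mono_set hsub
      _ ≤ (∫⁻ r in Set.Ioo (0:ℝ) 1, ENNReal.ofReal (r ^ (n-1)) * ENNReal.ofReal (g r))
          + ∫⁻ r in Set.Ici (1:ℝ), ENNReal.ofReal (r ^ (n-1)) * ENNReal.ofReal (g r) :=
          lintegral_union_le _ _ _
      _ < ⊤ := by
          have h1 : ∫⁻ r in Set.Ioo (0:ℝ) 1, ENNReal.ofReal (r ^ (n-1)) * ENNReal.ofReal (g r)
              = ∫⁻ r in Set.Ioo (0:ℝ) 1, ENNReal.ofReal (r ^ (n-1) * g r) := by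
            refine setLIntegral_congr_fun measurableSet_Ioo (
              fun r hr => ?_)
            rw [ENNReal.ofReal_mul (pow_nonneg hr.1.le _)]
          have h2 : ∫⁻ r in Set.Ici (1:ℝ), ENNReal.ofReal (r ^ (n-1)) * ENNReal.ofReal (g r) = 0 := by
            have e : ∀ r ∈ Set.Ici (1:ℝ),
                ENNReal.ofReal (r ^ (n-1)) * ENNReal.ofReal (g r) = (fun _ : ℝ => (0:ℝ≥0∞)) r :=
              fun r hr => by simp [hgs r hr]
            rw [setLIntegral_congr_fun measurableSet_Ici e,
              lintegral_zero]
          rw [h1, h2, add_zero]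
          exact hfin
  -- transfer
  have key : ∫⁻ x, ENNReal.ofReal (g ‖x‖) ∂μ
      = μ.toSphere Set.univ * ∫⁻ r : Set.Ioi (0:ℝ), ENNReal.ofReal (g r) ∂(Measure.volumeIoiPow (n-1)) := by
    have hmeasf : Measurable fun p : sphere (0 : E) 1 × Set.Ioi (0:ℝ) => ENNReal.ofReal (g p.2) :=
      ((ENNReal.measurable_ofReal.comp hg).comp (measurable_subtype_coe.comp measurable_snd))
    calc ∫⁻ x, ENNReal.ofReal (g ‖x‖) ∂μ
        = ∫⁻ x : ({0}ᶜ : Set E), ENNReal.ofReal (g ‖x.1‖) ∂(μ.comap Subtype.val) := by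
          rw [lintegral_subtype_comap (measurableSet_singleton (0:E)).compl
            (fun x => ENNReal.ofReal (g ‖x‖)), MeasureTheory.restrict_compl_singleton]
      _ = ∫⁻ p : sphere (0 : E) 1 × Set.Ioi (0:ℝ), ENNReal.ofReal (g p.2)
            ∂(μ.toSphere.prod (Measure.volumeIoiPow (Module.finrank ℝ E - 1))) := by
          rw [← μ.measurePreserving_homeomorphUnitSphereProd.lintegral_comp hmeasf]
          simp
      _ = μ.toSphere Set.univ * ∫⁻ r : Set.Ioi (0:ℝ), ENNReal.ofReal (g r) ∂(Measure.volumeIoiPow (n-1)) := by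
          rw [hdim, lintegral_prod _ hmeasf.aemeasurable]
          simp [lintegral_const, mul_comm]
  rw [key]
  exact ENNReal.mul_lt_top (measure_lt_top _ _) hc

lemma one_sub_rpow_integrable {γ : ℝ} (hγ : -1 < γ) :
    IntegrableOn (fun r : ℝ => (1 - r) ^ γ) (Set.Ioo (0:ℝ) 1) volume := by
  have h0 : IntervalIntegrable (fun x : ℝ => x ^ γ) volume 0 1 :=
    intervalIntegral.intervalIntegrable_rpow' hγ
  have h1 : IntervalIntegrable (fun x : ℝ => (1 - x) ^ γ) volume (1 - 0) (1 - 1) :=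
    h0.comp_sub_left 1
  norm_num at h1
  have h2 := (intervalIntegrable_iff_integrableOn_Ioc_of_le (by norm_num : (0:ℝ) ≤ 1)).mp h1.symm
  exact h2.mono_set Set.Ioo_subset_Ioc_self

lemma key_lintegral {γ : ℝ} (hγ : -1 < γ) :
    ∫⁻ r in Set.Ioo (0:ℝ) 1, ENNReal.ofReal ((1 - r) ^ γ) < ⊤ :=
  (one_sub_rpow_integrable hγ).setLIntegral_lt_top

lemma int2 {n : ℕ} (hn : 2 ≤ n) {γ : ℝ} (hγ : -1 < γ) :
    Integrable (fun x : EuclideanSpace ℝ (Fin n) =>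
      (if ‖x‖ ∈ Set.Ioo (0:ℝ) 1 then (1 - ‖x‖) ^ γ else 0)) volume := by
  refine radial_aux (by omega) (fun r => if r ∈ Set.Ioo (0:ℝ) 1 then (1 - r) ^ γ else 0)
    (Measurable.ite measurableSet_Ioo (by fun_prop) measurable_const) (fun r => ?_)
    (fun r hr => ?_) ?_
  · split
    · exact Real.rpow_nonneg (by rename_i h; linarith [h.2]) _
    · exact le_refl _
  · rw [if_neg (by simp only [Set.mem_Ioo, not_and, not_lt]; intro _; linarith)]
  · refine lt_of_le_of_lt (setLIntegral_mono' measurableSet_Ioo fun r hr => ?_) (key_lintegral hγ)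
    rw [if_pos hr]
    apply ENNReal.ofReal_le_ofReal
    calc r ^ (n-1) * (1 - r) ^ γ ≤ 1 * (1 - r) ^ γ := by
          apply mul_le_mul_of_nonneg_right (pow_le_one₀ hr.1.le hr.2.le)
            (Real.rpow_nonneg (by linarith [hr.2]) _)
      _ = (1 - r) ^ γ := one_mul _

lemma int1 {n : ℕ} (hn : 2 ≤ n) {γ : ℝ} (hγ : -1 < γ) :
    Integrable (fun x : EuclideanSpace ℝ (Fin n) =>
      (if ‖x‖ ∈ Set.Ioo (0:ℝ) 1 then (1 - ‖x‖) ^ γ + (1 - ‖x‖) ^ (γ+1) / ‖x‖ else 0)) volume := by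
  refine radial_aux (by omega)
    (fun r => if r ∈ Set.Ioo (0:ℝ) 1 then (1 - r) ^ γ + (1 - r) ^ (γ+1) / r else 0)
    (Measurable.ite measurableSet_Ioo (by fun_prop) measurable_const) (fun r => ?_)
    (fun r hr => ?_) ?_
  · split
    · rename_i h
      have h1 : (0:ℝ) ≤ 1 - r := by linarith [h.2]
      have h0 : (0:ℝ) < r := h.1
      positivity
    · exact le_refl _
  · rw [if_neg (by simp only [Set.mem_Ioo, not_and, not_lt]; intro _; linarith)]
  · have hfin2 : ∫⁻ r in Set.Ioo (0:ℝ) 1, ENNReal.ofReal (2 * (1 - r) ^ γ) < ⊤ :=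
      IntegrableOn.setLIntegral_lt_top ((one_sub_rpow_integrable hγ).const_mul 2)
    refine lt_of_le_of_lt (setLIntegral_mono' measurableSet_Ioo fun r hr => ?_) hfin2
    rw [if_pos hr]
    apply ENNReal.ofReal_le_ofReal
    obtain ⟨hr0, hr1⟩ := hr
    have h1 : (0:ℝ) < 1 - r := by linarith
    have hpow1 : r ^ (n-1) ≤ 1 := pow_le_one₀ hr0.le hr1.le
    have hpow2 : r ^ (n-1) / r = r ^ (n-2) := by
      rw [div_eq_iff hr0.ne', ← pow_succ]
      congr 1
      omega
    have hpow2' : r ^ (n-2) ≤ 1 := pow_le_one₀ hr0.le hr1.le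
    have hrg : (0:ℝ) ≤ (1 - r) ^ γ := Real.rpow_nonneg h1.le _
    have hstep : (1 - r) ^ (γ+1) ≤ (1 - r) ^ γ := by
      rw [Real.rpow_add h1, Real.rpow_one]
      nlinarith [Real.rpow_nonneg h1.le γ]
    have hg1 : (0:ℝ) ≤ (1 - r) ^ (γ+1) := Real.rpow_nonneg h1.le _
    calc r ^ (n-1) * ((1 - r) ^ γ + (1 - r) ^ (γ+1) / r)
        = r ^ (n-1) * (1 - r) ^ γ + (r ^ (n-1) / r) * (1 - r) ^ (γ+1) := by ring
      _ = r ^ (n-1) * (1 - r) ^ γ + r ^ (n-2) * (1 - r) ^ (γ+1) := by rw [hpow2]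
      _ ≤ 1 * (1 - r) ^ γ + 1 * (1 - r) ^ γ := by
          have a1 : r ^ (n-1) * (1 - r) ^ γ ≤ 1 * (1 - r) ^ γ :=
            mul_le_mul_of_nonneg_right hpow1 hrg
          have a2 : r ^ (n-2) * (1 - r) ^ (γ+1) ≤ 1 * (1 - r) ^ γ := by
            rw [one_mul]
            calc r ^ (n-2) * (1 - r) ^ (γ+1) ≤ 1 * (1 - r) ^ (γ+1) :=
                  mul_le_mul_of_nonneg_right hpow2' hg1
              _ = (1 - r) ^ (γ+1) := one_mul _
              _ ≤ (1 - r) ^ γ := hstep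
          linarith
      _ = 2 * (1 - r) ^ γ := by ring


/-- Key integrability computation of Example 3.1: for `α < 0`, `β < 0`,
`β ∉ {-1,-2}` and `β < 1/α - 2`, the second-order partial derivatives of
`H̃(u)`, of size comparable to `(1-|x|)^{α(β+2)-2}` plus
`(1-|x|)^{α(β+2)-1}/|x|`, are integrable over `B(0,1) ⊂ ℝⁿ`; in particular
`∫_{B(0,1)} (1-|x|)^{α(β+2)-2} dx < ∞`. -/
theorem stmt_15 (n : ℕ) (hn : 2 ≤ n) (α β : ℝ) (hα : α < 0) (hβ : β < 0)
    (hβ1 : β ≠ -1) (hβ2 : β ≠ -2) (hβ3 : β < 1 / α - 2) :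
    IntegrableOn
      (fun x : EuclideanSpace ℝ (Fin n) =>
        (1 - ‖x‖) ^ (α * (β + 2) - 2) + (1 - ‖x‖) ^ (α * (β + 2) - 1) / ‖x‖)
      (Metric.ball 0 1) volume ∧
    IntegrableOn
      (fun x : EuclideanSpace ℝ (Fin n) => (1 - ‖x‖) ^ (α * (β + 2) - 2))
      (Metric.ball 0 1) volume := by
  have hne : α ≠ 0 := hα.ne
  have hγ : -1 < α * (β + 2) - 2 := by
    have h2 : β + 2 < 1 / α := by linarith
    have h3 : α * (1 / α) < α * (β + 2) := mul_lt_mul_of_neg_left h2 hα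
    have h4 : α * (1 / α) = 1 := by field_simp
    linarith
  set γ : ℝ := α * (β + 2) - 2 with hγdef
  have he : α * (β + 2) - 1 = γ + 1 := by rw [hγdef]; ring
  rw [he]
  -- instances
  haveI : NeZero n := ⟨by omega⟩
  have h0vol : volume ({(0 : EuclideanSpace ℝ (Fin n))} : Set (EuclideanSpace ℝ (Fin n))) = 0 :=
    measure_singleton _
  have hsub : Metric.ball (0 : EuclideanSpace ℝ (Fin n)) 1 ⊆
      (Metric.ball (0 : EuclideanSpace ℝ (Fin n)) 1 \ {0}) ∪ {0} := by
    intro x hx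
    by_cases h : x = 0
    · exact Or.inr (by simp [h])
    · exact Or.inl ⟨hx, h⟩
  have hmemIoo : ∀ x : EuclideanSpace ℝ (Fin n),
      x ∈ Metric.ball (0 : EuclideanSpace ℝ (Fin n)) 1 \ {0} → ‖x‖ ∈ Set.Ioo (0:ℝ) 1 := by
    intro x hx
    refine ⟨norm_pos_iff.mpr ?_, ?_⟩
    · simpa using hx.2
    · simpa [mem_ball_zero_iff] using hx.1
  have hmeasd : MeasurableSet (Metric.ball (0 : EuclideanSpace ℝ (Fin n)) 1 \ {0}) :=
    measurableSet_ball.diff (measurableSet_singleton _)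
  constructor
  · have h1 := (int1 hn hγ).integrableOn
      (s := Metric.ball (0 : EuclideanSpace ℝ (Fin n)) 1 \ {0})
    have hdiff : IntegrableOn
        (fun x : EuclideanSpace ℝ (Fin n) => (1 - ‖x‖) ^ γ + (1 - ‖x‖) ^ (γ+1) / ‖x‖)
        (Metric.ball (0 : EuclideanSpace ℝ (Fin n)) 1 \ {0}) volume := by
      refine h1.congr_fun (fun x hx => ?_) hmeasd
      exact if_pos (hmemIoo x hx)
    have hsingle : IntegrableOn
        (fun x : EuclideanSpace ℝ (Fin n) => (1 - ‖x‖) ^ γ + (1 - ‖x‖) ^ (γ+1) / ‖x‖)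
        ({0} : Set (EuclideanSpace ℝ (Fin n))) volume :=
      (integrableOn_singleton_iff enorm_ne_top).mpr (Or.inr (by rw [h0vol]; exact ENNReal.zero_lt_top))
    exact (hdiff.union hsingle).mono_set hsub
  · have h1 := (int2 hn hγ).integrableOn
      (s := Metric.ball (0 : EuclideanSpace ℝ (Fin n)) 1 \ {0})
    have hdiff : IntegrableOn
        (fun x : EuclideanSpace ℝ (Fin n) => (1 - ‖x‖) ^ γ)
        (Metric.ball (0 : EuclideanSpace ℝ (Fin n)) 1 \ {0}) volume := by
      refine h1.congr_fun (fun x hx => ?_) hmeasd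
      exact if_pos (hmemIoo x hx)
    have hsingle : IntegrableOn
        (fun x : EuclideanSpace ℝ (Fin n) => (1 - ‖x‖) ^ γ)
        ({0} : Set (EuclideanSpace ℝ (Fin n))) volume :=
      (integrableOn_singleton_iff enorm_ne_top).mpr (Or.inr (by rw [h0vol]; exact ENNReal.zero_lt_top))
    exact (hdiff.union hsingle).mono_set hsub
end
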